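/- arXiv:2401.14223 — 6 statements merged into one kernel-verified Lean document; each statement's English description precedes it below -/
import Mathlib

section
/- In the convex homogeneous setup, for every m : Fin d → ℕ and every real ħ > 0, the number f(ħ • m) is the least upper bound (IsLUB) of the set of real numbers { ħ * ⟪m, k⟫ / a | (k, a) ∈ 𝒜 } = { ħ * ⟪m, k⟫ / ⟪p, k⟫ | k : Fin d → ℤ, p ∈ N, ∃ T > 0, ∇f p = T • k } (here m and k are regarded as vectors in E). (Theorem 1.2 / Proposition 4.3 of the paper: the EBK energy of a 1-homogeneous convex toric Hamiltonian is recovered from the marked action spectrum as E_m = sup_{(k,a)∈𝒜} ħ⟨m,k⟩/a.) -/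
set_option maxHeartbeats 1000000

open scoped RealInnerProductSpace

/-- An integer vector regarded as an element of Euclidean space. -/
def intVec {d : ℕ} (k : Fin d → ℤ) : EuclideanSpace ℝ (Fin d) := WithLp.toLp 2 (fun i => (k i : ℝ))

/-- A natural number vector regarded as an element of Euclidean space. -/
def natVec {d : ℕ} (m : Fin d → ℕ) : EuclideanSpace ℝ (Fin d) := WithLp.toLp 2 (fun i => (m i : ℝ))

section Aux
variable {d : ℕ}
local notation "E" => EuclideanSpace ℝ (Fin d)

lemma aux_f0 (f : E → ℝ) (hf_hom : ∀ t : ℝ, 0 < t → ∀ x, f (t • x) = t * f x) :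
    f 0 = 0 := by
  have h := hf_hom 2 (by norm_num) 0
  rw [smul_zero] at h; linarith

lemma aux_euler (f : E → ℝ) (gradf : E → E)
    (hf_hom : ∀ t : ℝ, 0 < t → ∀ x, f (t • x) = t * f x)
    {p : E} (hp : p ≠ 0) (hg : HasGradientAt f (gradf p) p) :
    ⟪gradf p, p⟫ = f p := by
  have h1 : HasDerivAt (fun t : ℝ => f (t • p)) ⟪gradf p, p⟫ 1 := by
    have h2 : HasDerivAt (fun t : ℝ => t • p) p 1 := by
      simpa using (hasDerivAt_id (1:ℝ)).smul_const p
    have hg2 : HasFDerivAt f ((InnerProductSpace.toDual ℝ _) (gradf p)) ((1:ℝ) • p) := by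
      simpa using hg.hasFDerivAt
    have h3 := hg2.comp_hasDerivAt (1:ℝ) h2
    simpa [Function.comp_def] using h3
  have h4 : HasDerivAt (fun t : ℝ => t * f p) (f p) 1 := by
    simpa using (hasDerivAt_id (1:ℝ)).mul_const (f p)
  have h5 : (fun t : ℝ => f (t • p)) =ᶠ[nhds (1:ℝ)] (fun t : ℝ => t * f p) := by
    filter_upwards [eventually_gt_nhds (by norm_num : (0:ℝ) < 1)] with t ht
    exact hf_hom t ht p
  exact (h1.congr_of_eventuallyEq h5.symm).unique h4

lemma aux_bdd (hd : 1 ≤ d) (f : E → ℝ) (hf_cont : Continuous f)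
    (hf_hom : ∀ t : ℝ, 0 < t → ∀ x, f (t • x) = t * f x)
    (hf_pos : ∀ x : E, x ≠ 0 → 0 < f x) :
    ∃ R : ℝ, 0 < R ∧ ∀ x : E, f x ≤ 1 → ‖x‖ ≤ R := by
  have hne : (Metric.sphere (0:E) 1).Nonempty := by
    refine ⟨EuclideanSpace.single ⟨0, hd⟩ (1:ℝ), ?_⟩
    simp [EuclideanSpace.norm_single]
  obtain ⟨u, hu, hmin⟩ := (isCompact_sphere (0:E) 1).exists_isMinOn hne hf_cont.continuousOn
  have hu0 : u ≠ 0 := by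
    intro h; rw [h] at hu; simp at hu
  have hc : 0 < f u := hf_pos u hu0
  refine ⟨(f u)⁻¹, inv_pos.mpr hc, ?_⟩
  intro x hx
  rcases eq_or_ne x 0 with rfl | hx0
  · simp; positivity
  · have hnx : (0:ℝ) < ‖x‖ := norm_pos_iff.mpr hx0
    have hmem : ‖x‖⁻¹ • x ∈ Metric.sphere (0:E) 1 := by
      simp [norm_smul, abs_of_pos (inv_pos.mpr hnx), inv_mul_cancel₀ hnx.ne']
    have h1 : f u ≤ f (‖x‖⁻¹ • x) := isMinOn_iff.1 hmin _ hmem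
    have h2 : f x = ‖x‖ * f (‖x‖⁻¹ • x) := by
      have := hf_hom ‖x‖ hnx (‖x‖⁻¹ • x)
      rwa [smul_smul, mul_inv_cancel₀ hnx.ne', one_smul] at this
    have : ‖x‖ * f u ≤ 1 := le_trans (by nlinarith) hx
    nlinarith [mul_le_mul_of_nonneg_right this (le_of_lt (inv_pos.mpr hc)),
      mul_inv_cancel₀ hc.ne']

lemma aux_support (f : E → ℝ) (gradf : E → E)
    (hf_hom : ∀ t : ℝ, 0 < t → ∀ x, f (t • x) = t * f x)
    (hf_grad : ∀ x : E, x ≠ 0 → HasGradientAt f (gradf x) x)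
    (hconv : Convex ℝ {x : E | f x ≤ 1})
    {p : E} (hp1 : f p = 1) (hp0 : p ≠ 0)
    {y : E} (hy : f y ≤ 1) : ⟪gradf p, y⟫ ≤ 1 := by
  set φ : ℝ → ℝ := fun t => f (p + t • (y - p)) with hφ
  have hL : HasDerivAt (fun t : ℝ => p + t • (y - p)) (y - p) 0 := by
    simpa using ((hasDerivAt_id (0:ℝ)).smul_const (y - p)).const_add p
  have hg : HasFDerivAt f ((InnerProductSpace.toDual ℝ _) (gradf p)) (p + (0:ℝ) • (y - p)) := by
    simpa using (hf_grad p hp0).hasFDerivAt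
  have hD : HasDerivAt φ ⟪gradf p, y - p⟫ 0 := by
    simpa [Function.comp_def] using hg.comp_hasDerivAt (0:ℝ) hL
  have hslope : ∀ t ∈ Set.Ioo (0:ℝ) 1, slope φ 0 t ≤ 0 := by
    intro t ht
    have hmem : p + t • (y - p) ∈ {x : E | f x ≤ 1} := by
      have h2 := hconv (by simp [hp1] : p ∈ {x : E | f x ≤ 1}) hy
        (by linarith [ht.1, ht.2] : (0:ℝ) ≤ 1 - t) ht.1.le (by ring)
      have heq : p + t • (y - p) = (1 - t) • p + t • y := by module
      rw [heq]; exact h2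
    have hφt : φ t ≤ 1 := hmem
    have hφ0 : φ 0 = 1 := by simp [hφ, hp1]
    rw [slope_def_field]
    have : (φ t - φ 0) / (t - 0) ≤ 0 :=
      div_nonpos_iff.mpr (Or.inr ⟨by rw [hφ0]; linarith, by linarith [ht.1]⟩)
    simpa [div_eq_inv_mul] using this
  have htend := hasDerivAt_iff_tendsto_slope.mp hD
  have htend' : Filter.Tendsto (slope φ 0) (nhdsWithin 0 (Set.Ioi 0)) (nhds ⟪gradf p, y - p⟫) :=
    htend.mono_left (nhdsWithin_mono 0 (fun x hx => ne_of_gt hx))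
  have hle : ⟪gradf p, y - p⟫ ≤ 0 := by
    refine le_of_tendsto htend' ?_
    filter_upwards [Ioo_mem_nhdsGT_of_mem (Set.mem_Ico.mpr ⟨le_refl 0, one_pos⟩)] with t ht
    exact hslope t ht
  have heuler : ⟪gradf p, p⟫ = f p := aux_euler f gradf hf_hom hp0 (hf_grad p hp0)
  have : ⟪gradf p, y⟫ - ⟪gradf p, p⟫ ≤ 0 := by rwa [← inner_sub_right]
  rw [heuler, hp1] at this; linarith

lemma aux_support' (f : E → ℝ) (gradf : E → E)
    (hf_hom : ∀ t : ℝ, 0 < t → ∀ x, f (t • x) = t * f x)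
    (hf_pos : ∀ x : E, x ≠ 0 → 0 < f x)
    (hf_grad : ∀ x : E, x ≠ 0 → HasGradientAt f (gradf x) x)
    (hconv : Convex ℝ {x : E | f x ≤ 1})
    {p : E} (hp1 : f p = 1) (x : E) : ⟪gradf p, x⟫ ≤ f x := by
  have hf0 : f 0 = 0 := aux_f0 f hf_hom
  have hp0 : p ≠ 0 := by intro h; rw [h, hf0] at hp1; norm_num at hp1
  rcases eq_or_ne x 0 with rfl | hx0
  · simp [hf0]
  · have hfx : 0 < f x := hf_pos x hx0
    have hy : f ((f x)⁻¹ • x) ≤ 1 := by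
      rw [hf_hom (f x)⁻¹ (inv_pos.mpr hfx) x, inv_mul_cancel₀ hfx.ne']
    have h1 := aux_support f gradf hf_hom hf_grad hconv hp1 hp0 hy
    rw [real_inner_smul_right] at h1
    nlinarith [mul_le_mul_of_nonneg_left h1 hfx.le, mul_inv_cancel₀ hfx.ne']

lemma aux_max (hd : 1 ≤ d) (f : E → ℝ) (gradf : E → E)
    (hf_cont : Continuous f)
    (hf_hom : ∀ t : ℝ, 0 < t → ∀ x, f (t • x) = t * f x)
    (hf_pos : ∀ x : E, x ≠ 0 → 0 < f x)
    (hf_grad : ∀ x : E, x ≠ 0 → HasGradientAt f (gradf x) x)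
    {k : E} (hk : k ≠ 0) :
    ∃ p : E, f p = 1 ∧ 0 < ⟪k, p⟫ ∧ gradf p = (⟪k, p⟫)⁻¹ • k := by
  obtain ⟨R, hR, hRb⟩ := aux_bdd hd f hf_cont hf_hom hf_pos
  have hf0 : f 0 = 0 := aux_f0 f hf_hom
  set K : Set E := {x : E | f x ≤ 1} with hK
  have hKc : IsCompact K := by
    refine Metric.isCompact_of_isClosed_isBounded ?_ ?_
    · exact IsClosed.preimage hf_cont isClosed_Iic
    · exact (Metric.isBounded_closedBall (x := (0:E)) (r := R)).subset
        (fun x hx => Metric.mem_closedBall.mpr (by simpa using hRb x hx))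
  have hKne : K.Nonempty := ⟨0, by simp [hK, hf0]⟩
  have hcont : Continuous (fun y : E => ⟪k, y⟫) := Continuous.inner continuous_const continuous_id
  obtain ⟨p, hpK, hmax⟩ := hKc.exists_isMaxOn hKne hcont.continuousOn
  have hmax' : ∀ y ∈ K, ⟪k, y⟫ ≤ ⟪k, p⟫ := fun y hy => isMaxOn_iff.1 hmax y hy
  set M : ℝ := ⟪k, p⟫ with hM
  have hfk : 0 < f k := hf_pos k hk
  have hq0 : (f k)⁻¹ • k ∈ K := by
    have := hf_hom (f k)⁻¹ (inv_pos.mpr hfk) k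
    simp only [hK, Set.mem_setOf_eq, this, inv_mul_cancel₀ hfk.ne', le_refl]
  have hMpos : 0 < M := by
    have h1 := hmax' _ hq0
    have h2 : ⟪k, (f k)⁻¹ • k⟫ = (f k)⁻¹ * ‖k‖ ^ 2 := by
      rw [real_inner_smul_right, real_inner_self_eq_norm_sq]
    have h3 : (0:ℝ) < (f k)⁻¹ * ‖k‖ ^ 2 := by
      have : (0:ℝ) < ‖k‖ := norm_pos_iff.mpr hk
      positivity
    rw [h2] at h1; linarith
  have hp0 : p ≠ 0 := by
    intro h; rw [h] at hM; simp [hM] at hMpos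
  have hp1 : f p = 1 := by
    rcases lt_or_eq_of_le (show f p ≤ 1 from hpK) with hlt | heq
    · exfalso
      have hfp : 0 < f p := hf_pos p hp0
      have hp' : (f p)⁻¹ • p ∈ K := by
        have := hf_hom (f p)⁻¹ (inv_pos.mpr hfp) p
        simp only [hK, Set.mem_setOf_eq, this, inv_mul_cancel₀ hfp.ne', le_refl]
      have h1 := hmax' _ hp'
      rw [real_inner_smul_right, ← hM] at h1
      have h2 : 1 < (f p)⁻¹ := (one_lt_inv₀ hfp).mpr hlt
      nlinarith
    · exact heq
  refine ⟨p, hp1, hMpos, ?_⟩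
  have hgradp := hf_grad p hp0
  have key : ∀ v : E, ⟪k, v⟫ = M * ⟪gradf p, v⟫ := by
    intro v
    set g : ℝ → ℝ := fun t => ⟪k, p + t • v⟫ / f (p + t • v) with hg
    have hnum : HasDerivAt (fun t : ℝ => ⟪k, p + t • v⟫) ⟪k, v⟫ 0 := by
      have heq : (fun t : ℝ => ⟪k, p + t • v⟫) = fun t : ℝ => ⟪k, p⟫ + t * ⟪k, v⟫ := by
        funext t; rw [inner_add_right, real_inner_smul_right]
      rw [heq]
      simpa using ((hasDerivAt_id (0:ℝ)).mul_const ⟪k, v⟫).const_add ⟪k, p⟫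
    have hL : HasDerivAt (fun t : ℝ => p + t • v) v 0 := by
      simpa using ((hasDerivAt_id (0:ℝ)).smul_const v).const_add p
    have hgF : HasFDerivAt f ((InnerProductSpace.toDual ℝ _) (gradf p)) (p + (0:ℝ) • v) := by
      simpa using hgradp.hasFDerivAt
    have hden : HasDerivAt (fun t : ℝ => f (p + t • v)) ⟪gradf p, v⟫ 0 := by
      simpa [Function.comp_def] using hgF.comp_hasDerivAt (0:ℝ) hL
    have hden0 : f (p + (0:ℝ) • v) ≠ 0 := by simp [hp1]
    have hDg : HasDerivAt g ((⟪k, v⟫ * f (p + (0:ℝ) • v) - ⟪k, p + (0:ℝ) • v⟫ * ⟪gradf p, v⟫)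
        / (f (p + (0:ℝ) • v)) ^ 2) 0 := hnum.div hden hden0
    have hDg' : HasDerivAt g (⟪k, v⟫ - M * ⟪gradf p, v⟫) 0 := by
      have : (⟪k, v⟫ * f (p + (0:ℝ) • v) - ⟪k, p + (0:ℝ) • v⟫ * ⟪gradf p, v⟫)
          / (f (p + (0:ℝ) • v)) ^ 2 = ⟪k, v⟫ - M * ⟪gradf p, v⟫ := by
        simp [hp1, hM]
      rwa [this] at hDg
    have hloc : IsLocalMax g 0 := by
      have hne : ∀ᶠ t : ℝ in nhds 0, p + t • v ≠ 0 := by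
        have hcont2 : Continuous (fun t : ℝ => p + t • v) := by continuity
        have : {t : ℝ | p + t • v ≠ 0} ∈ nhds (0:ℝ) :=
          (isOpen_ne.preimage hcont2).mem_nhds (by simpa using hp0)
        exact this
      filter_upwards [hne] with t ht
      have hfx : 0 < f (p + t • v) := hf_pos _ ht
      have hmem : (f (p + t • v))⁻¹ • (p + t • v) ∈ K := by
        have := hf_hom (f (p + t • v))⁻¹ (inv_pos.mpr hfx) (p + t • v)
        simp only [hK, Set.mem_setOf_eq, this, inv_mul_cancel₀ hfx.ne', le_refl]
      have h1 := hmax' _ hmem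
      rw [real_inner_smul_right] at h1
      have hg0 : g 0 = M := by
        show ⟪k, p + (0:ℝ) • v⟫ / f (p + (0:ℝ) • v) = M
        rw [zero_smul, add_zero, hp1, div_one]
      have hgt : g t = (f (p + t • v))⁻¹ * ⟪k, p + t • v⟫ := by
        show ⟪k, p + t • v⟫ / f (p + t • v) = _
        rw [div_eq_inv_mul]
      rw [hgt, hg0]; exact h1
    have := hloc.hasDerivAt_eq_zero hDg'
    linarith
  have hkey2 : k = M • gradf p := by
    apply ext_inner_right ℝ
    intro v
    rw [real_inner_smul_left]; exact key v
  show gradf p = M⁻¹ • k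
  rw [hkey2, smul_smul, inv_mul_cancel₀ hMpos.ne', one_smul]

end Aux

/-- **Theorem 1.2 / Proposition 4.3 (convex case).** In the convex homogeneous setup,
the EBK energy `f (ħ • m)` is the least upper bound of the set
`{ ħ⟨m,k⟩/⟨p,k⟩ | k ∈ ℤⁿ, p ∈ N, ∇f p ∼ k }` coming from the marked action spectrum. -/
theorem ebk_convex_isLUB (d : ℕ) (hd : 1 ≤ d)
    (f : EuclideanSpace ℝ (Fin d) → ℝ)
    (gradf : EuclideanSpace ℝ (Fin d) → EuclideanSpace ℝ (Fin d))
    (hf_cont : Continuous f)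
    (hf_hom : ∀ t : ℝ, 0 < t → ∀ x, f (t • x) = t * f x)
    (hf_pos : ∀ x : EuclideanSpace ℝ (Fin d), x ≠ 0 → 0 < f x)
    (hf_grad : ∀ x : EuclideanSpace ℝ (Fin d), x ≠ 0 → HasGradientAt f (gradf x) x)
    (hgrad_cont : ContinuousOn gradf {x : EuclideanSpace ℝ (Fin d) | x ≠ 0})
    (hconv : StrictConvex ℝ {x : EuclideanSpace ℝ (Fin d) | f x ≤ 1})
    (m : Fin d → ℕ) (hbar : ℝ) (hhbar : 0 < hbar) :
    IsLUB { E : ℝ | ∃ (k : Fin d → ℤ) (p : EuclideanSpace ℝ (Fin d)),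
        f p = 1 ∧
        (∃ T : ℝ, 0 < T ∧ gradf p = T • intVec k) ∧
        E = hbar * ⟪natVec m, intVec k⟫ / ⟪p, intVec k⟫ }
      (f (hbar • natVec m)) := by
  have hf0 : f 0 = 0 := aux_f0 f hf_hom
  have hconv' : Convex ℝ {x : EuclideanSpace ℝ (Fin d) | f x ≤ 1} := hconv.convex
  obtain ⟨R, hR, hRb⟩ := aux_bdd hd f hf_cont hf_hom hf_pos
  constructor
  · -- upper bound
    rintro e ⟨k, p, hp1, ⟨T, hT, hgr⟩, rfl⟩
    have hp0 : p ≠ 0 := by intro h; rw [h, hf0] at hp1; norm_num at hp1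
    have heuler : ⟪gradf p, p⟫ = 1 := by
      rw [aux_euler f gradf hf_hom hp0 (hf_grad p hp0), hp1]
    have hpk : ⟪p, intVec k⟫ = T⁻¹ := by
      have h1 : ⟪gradf p, p⟫ = T * ⟪intVec k, p⟫ := by
        rw [hgr, real_inner_smul_left]
      have h2 : T * ⟪intVec k, p⟫ = 1 := by rw [← h1, heuler]
      have h3 : ⟪p, intVec k⟫ = ⟪intVec k, p⟫ := real_inner_comm _ _
      rw [h3]
      have h5 : ⟪intVec k, p⟫ * T = 1 := by linear_combination h2
      exact eq_inv_of_mul_eq_one_left h5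
    have hsup := aux_support' f gradf hf_hom hf_pos hf_grad hconv' hp1 (hbar • natVec m)
    have hgm : ⟪gradf p, hbar • natVec m⟫ = T * (hbar * ⟪natVec m, intVec k⟫) := by
      rw [hgr, real_inner_smul_left, real_inner_smul_right, real_inner_comm]
    rw [hpk, div_eq_mul_inv, inv_inv]
    calc hbar * ⟪natVec m, intVec k⟫ * T = ⟪gradf p, hbar • natVec m⟫ := by rw [hgm]; ring
      _ ≤ f (hbar • natVec m) := hsup
  · -- least upper bound
    intro b hb
    -- for every nonzero integer vector there is a spectrum element, bounded by b
    have hS : ∀ k : Fin d → ℤ, intVec k ≠ 0 →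
        ∃ p : EuclideanSpace ℝ (Fin d), f p = 1 ∧ 0 < ⟪intVec k, p⟫ ∧
          hbar * ⟪natVec m, intVec k⟫ / ⟪intVec k, p⟫ ≤ b := by
      intro k hk
      obtain ⟨p, hp1, hMp, hgp⟩ := aux_max hd f gradf hf_cont hf_hom hf_pos hf_grad hk
      refine ⟨p, hp1, hMp, ?_⟩
      have hmem : hbar * ⟪natVec m, intVec k⟫ / ⟪p, intVec k⟫ ∈
          { E : ℝ | ∃ (k : Fin d → ℤ) (p : EuclideanSpace ℝ (Fin d)),
            f p = 1 ∧ (∃ T : ℝ, 0 < T ∧ gradf p = T • intVec k) ∧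
            E = hbar * ⟪natVec m, intVec k⟫ / ⟪p, intVec k⟫ } :=
        ⟨k, p, hp1, ⟨(⟪intVec k, p⟫)⁻¹, inv_pos.mpr hMp, hgp⟩, rfl⟩
      have h4 := hb hmem
      have h5 : ⟪intVec k, p⟫ = ⟪p, intVec k⟫ := real_inner_comm _ _
      rw [h5]
      exact h4
    -- b is nonnegative
    have hb0 : 0 ≤ b := by
      set e : Fin d → ℤ := fun i => if i = ⟨0, hd⟩ then 1 else 0 with he
      have hev : intVec e ≠ 0 := by
        intro h
        have : intVec e ⟨0, hd⟩ = 0 := by rw [h]; rfl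
        simp [intVec, he] at this
      have hnev : intVec (-e) ≠ 0 := by
        intro h
        have : intVec (-e) ⟨0, hd⟩ = 0 := by rw [h]; rfl
        simp [intVec, he] at this
      have hneg : intVec (-e) = -intVec e := by
        ext i; simp [intVec]
      rcases le_or_gt 0 ⟪natVec m, intVec e⟫ with hpos | hneg'
      · obtain ⟨p, hp1, hMp, hle⟩ := hS e hev
        refine le_trans ?_ hle
        positivity
      · obtain ⟨p, hp1, hMp, hle⟩ := hS (-e) hnev
        refine le_trans ?_ hle
        rw [hneg] at hMp ⊢
        rw [inner_neg_right, inner_neg_left]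
        rw [inner_neg_left] at hMp
        have h2 : 0 < -⟪intVec e, p⟫ := hMp
        have h3 : 0 < hbar * -⟪natVec m, intVec e⟫ := by nlinarith
        positivity
    by_cases hm : natVec m = 0
    · rw [hm, smul_zero, hf0]; exact hb0
    · -- main case
      have hfm : 0 < f (natVec m) := hf_pos _ hm
      set q : EuclideanSpace ℝ (Fin d) := (f (natVec m))⁻¹ • natVec m with hq
      have hq1 : f q = 1 := by
        rw [hq, hf_hom _ (inv_pos.mpr hfm), inv_mul_cancel₀ hfm.ne']
      have hq0 : q ≠ 0 := by
        intro h; rw [h, hf0] at hq1; norm_num at hq1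
      set v : EuclideanSpace ℝ (Fin d) := gradf q with hv
      have heulq : ⟪v, q⟫ = 1 := by
        rw [hv, aux_euler f gradf hf_hom hq0 (hf_grad q hq0), hq1]
      have hmv : ⟪v, natVec m⟫ = f (natVec m) := by
        have h2 : (f (natVec m)) * ⟪v, q⟫ = ⟪v, natVec m⟫ := by
          rw [hq, real_inner_smul_right, ← mul_assoc, mul_inv_cancel₀ hfm.ne', one_mul]
        rw [heulq, mul_one] at h2
        exact h2.symm
    -- reduce to an inner product bound
      rw [hf_hom hbar hhbar]
      rw [← hmv]
      have hv0 : v ≠ 0 := by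
        intro h; rw [h] at heulq; simp at heulq
      obtain ⟨i₀, hi₀⟩ : ∃ i, v i ≠ 0 := by
        by_contra h
        push_neg at h
        exact hv0 (by ext i; exact h i)
      set N₀ : ℕ := ⌈(|v i₀|)⁻¹⌉₊ with hN₀
      set C : ℝ := (b * R + hbar * ‖natVec m‖) * Real.sqrt d with hC
      have hC0 : 0 ≤ C := by
        have : (0:ℝ) ≤ Real.sqrt d := Real.sqrt_nonneg _
        have hm0 : (0:ℝ) ≤ ‖natVec m‖ := norm_nonneg _
        positivity
      have key : ∀ n : ℕ, max N₀ 1 ≤ n → hbar * ⟪v, natVec m⟫ ≤ b + C / n := by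
        intro n hn
        have hn1 : 1 ≤ n := le_trans (le_max_right _ _) hn
        have hnpos : (0:ℝ) < n := by exact_mod_cast hn1
        have hnN : (|v i₀|)⁻¹ ≤ (n:ℝ) := by
          have : N₀ ≤ n := le_trans (le_max_left _ _) hn
          calc (|v i₀|)⁻¹ ≤ (N₀:ℝ) := Nat.le_ceil _
            _ ≤ n := by exact_mod_cast this
        set k : Fin d → ℤ := fun i => round ((n:ℝ) * v i) with hk
        set w : EuclideanSpace ℝ (Fin d) := intVec k with hw
        have hwi : ∀ i, |w i - (n:ℝ) * v i| ≤ 1 := by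
          intro i
          have := abs_sub_round ((n:ℝ) * v i)
          have hwk : w i = ((round ((n:ℝ) * v i) : ℤ) : ℝ) := rfl
          rw [hwk, abs_sub_comm]; linarith
        have hnorm : ‖w - (n:ℝ) • v‖ ≤ Real.sqrt d := by
          rw [EuclideanSpace.norm_eq]
          apply Real.sqrt_le_sqrt
          calc ∑ i, ‖(w - (n:ℝ) • v) i‖ ^ 2 ≤ ∑ _i : Fin d, (1:ℝ) := by
                apply Finset.sum_le_sum
                intro i _
                have h1 : (w - (n:ℝ) • v) i = w i - (n:ℝ) * v i := by
                  simp [PiLp.sub_apply, PiLp.smul_apply, smul_eq_mul]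
                rw [h1, Real.norm_eq_abs]
                have := hwi i
                nlinarith [abs_nonneg (w i - (n:ℝ) * v i)]
            _ = (d:ℝ) := by simp
        have hk0 : intVec k ≠ 0 := by
          intro h
          have h2 : ((round ((n:ℝ) * v i₀) : ℤ) : ℝ) = 0 := congrArg (fun x : EuclideanSpace ℝ (Fin d) => x i₀) h
          have h3 := abs_sub_round ((n:ℝ) * v i₀)
          rw [h2, sub_zero] at h3
          have h4 : 1 ≤ (n:ℝ) * |v i₀| := by
            rw [← inv_mul_cancel₀ (abs_ne_zero.mpr hi₀)]
            apply mul_le_mul_of_nonneg_right hnN (abs_nonneg _)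
          have h5 : |(n:ℝ) * v i₀| = (n:ℝ) * |v i₀| := by
            rw [abs_mul, abs_of_pos hnpos]
          rw [h5] at h3
          linarith
        obtain ⟨p, hp1, hMp, hle⟩ := hS k hk0
        rw [← hw] at hMp hle
        have hp0 : p ≠ 0 := by intro h; rw [h, hf0] at hp1; norm_num at hp1
        -- from hle : hbar * ⟪natVec m, w⟫ / ⟪w, p⟫ ≤ b
        have hnum_le : hbar * ⟪natVec m, w⟫ ≤ b * ⟪w, p⟫ := by
          rwa [div_le_iff₀ hMp] at hle
        -- bound ⟪w, p⟫
        have hvp : ⟪v, p⟫ ≤ 1 := by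
          have := aux_support' f gradf hf_hom hf_pos hf_grad hconv' hq1 p
          rwa [hp1] at this
        have hpR : ‖p‖ ≤ R := hRb p hp1.le
        have hwp : ⟪w, p⟫ ≤ (n:ℝ) + Real.sqrt d * R := by
          have h1 : ⟪w, p⟫ = (n:ℝ) * ⟪v, p⟫ + ⟪w - (n:ℝ) • v, p⟫ := by
            rw [inner_sub_left, real_inner_smul_left]; ring
          have h2 : ⟪w - (n:ℝ) • v, p⟫ ≤ ‖w - (n:ℝ) • v‖ * ‖p‖ := real_inner_le_norm _ _
          have h3 : ‖w - (n:ℝ) • v‖ * ‖p‖ ≤ Real.sqrt d * R := by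
            apply mul_le_mul hnorm hpR (norm_nonneg _) (Real.sqrt_nonneg _)
          have h4 : (n:ℝ) * ⟪v, p⟫ ≤ (n:ℝ) * 1 := by
            apply mul_le_mul_of_nonneg_left hvp hnpos.le
          rw [h1]; nlinarith
        -- bound ⟪natVec m, w⟫ from below
        have hmw : (n:ℝ) * ⟪v, natVec m⟫ - ‖natVec m‖ * Real.sqrt d ≤ ⟪natVec m, w⟫ := by
          have h1 : ⟪natVec m, w⟫ = (n:ℝ) * ⟪natVec m, v⟫ + ⟪natVec m, w - (n:ℝ) • v⟫ := by
            rw [inner_sub_right, real_inner_smul_right]; ring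
          have h2 : -(‖natVec m‖ * ‖w - (n:ℝ) • v‖) ≤ ⟪natVec m, w - (n:ℝ) • v⟫ :=
            neg_le_of_abs_le (abs_real_inner_le_norm _ _)
          have h3 : ‖natVec m‖ * ‖w - (n:ℝ) • v‖ ≤ ‖natVec m‖ * Real.sqrt d :=
            mul_le_mul_of_nonneg_left hnorm (norm_nonneg _)
          rw [h1, real_inner_comm (natVec m) v]
          nlinarith
        -- combine
        have hcomb : hbar * ((n:ℝ) * ⟪v, natVec m⟫) ≤ b * (n:ℝ) + C := by
          have h1 : hbar * ⟪natVec m, w⟫ ≤ b * ((n:ℝ) + Real.sqrt d * R) := by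
            calc hbar * ⟪natVec m, w⟫ ≤ b * ⟪w, p⟫ := hnum_le
              _ ≤ b * ((n:ℝ) + Real.sqrt d * R) := mul_le_mul_of_nonneg_left hwp hb0
          have h2 : hbar * ((n:ℝ) * ⟪v, natVec m⟫ - ‖natVec m‖ * Real.sqrt d) ≤
              hbar * ⟪natVec m, w⟫ := mul_le_mul_of_nonneg_left hmw hhbar.le
          rw [hC]; nlinarith
        rw [← sub_nonneg]
        have hexp : b + C / n - hbar * ⟪v, natVec m⟫ =
            (b * n + C - hbar * ((n:ℝ) * ⟪v, natVec m⟫)) / n := by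
          field_simp
        rw [hexp]
        apply div_nonneg _ hnpos.le
        linarith [hcomb]
      -- take the limit n → ∞
      have htend : Filter.Tendsto (fun n : ℕ => b + C / n) Filter.atTop (nhds b) := by
        have h0 := tendsto_const_div_atTop_nhds_zero_nat C
        have h1 := h0.const_add b
        simpa using h1
      refine ge_of_tendsto htend ?_
      filter_upwards [Filter.eventually_ge_atTop (max N₀ 1)] with n hn
      exact key n hn
end

section
/- In the convex homogeneous setup, the Legendre transform of the hypersurface N, namely the set L(N) = { (⟪p, ∇f p⟫)⁻¹ • ∇f p | p ∈ N }, equals { q ∈ E | sSup { ⟪p, q⟫ | p ∈ N } = 1 }. (The last assertion of Lemma 3.2: L(N) = {q ∈ ℝⁿ | sup_{p∈N} ⟨p,q⟩ = 1} for a smooth, compact, strictly convex hypersurface N enclosing the origin.) -/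
/-!
By Euler's relation `⟪p, ∇f p⟫ = f p = 1` on `N`, so `L(p) = ∇f p`. Since `K` is convex and
`f` is maximal on `K` at `p ∈ N`, the derivative of `f` at `p` is nonpositive along every
direction `x - p` with `x ∈ K`; hence `⟪x, ∇f p⟫ ≤ 1` on `N`, with equality at `x = p`.
Conversely, if `sup_{x ∈ N} ⟪x, q⟫ = 1`, the supremum is attained at some `p` of the compact
set `N`, and homogeneity gives `⟪x, q⟫ ≤ f x` on all of `E`. So `f - ⟪·, q⟫` has a global
minimum `0` at `p`, and Fermat's rule gives `q = ∇f p = L(p)`.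
-/

open scoped RealInnerProductSpace
open Set Filter Topology InnerProductSpace

section Homogeneous

variable {E : Type*} [NormedAddCommGroup E] [NormedSpace ℝ E] {f : E → ℝ}

theorem apply_zero_of_homogeneous (hf_hom : ∀ t : ℝ, 0 < t → ∀ x, f (t • x) = t * f x) :
    f 0 = 0 := by
  have h := hf_hom 2 two_pos 0
  rw [smul_zero] at h
  linarith

theorem isCompact_preimage_one_of_homogeneous [ProperSpace E] (hf_cont : Continuous f)
    (hf_hom : ∀ t : ℝ, 0 < t → ∀ x, f (t • x) = t * f x)
    (hf_pos : ∀ x, x ≠ 0 → 0 < f x) : IsCompact (f ⁻¹' {1}) := by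
  obtain ⟨C, hC⟩ := (isCompact_sphere (0 : E) 1).bddAbove_image (f := fun x ↦ (f x)⁻¹)
    (hf_cont.continuousOn.inv₀ fun x hx ↦ (hf_pos x (ne_zero_of_mem_unit_sphere ⟨x, hx⟩)).ne')
  refine (isCompact_closedBall (0 : E) C).of_isClosed_subset
    (isClosed_singleton.preimage hf_cont) fun p (hp : f p = 1) ↦ ?_
  have hp0 : p ≠ 0 := by
    rintro rfl
    simp [apply_zero_of_homogeneous hf_hom] at hp
  have hnorm : 0 < ‖p‖ := norm_pos_iff.mpr hp0
  have hu : ‖p‖⁻¹ • p ∈ Metric.sphere (0 : E) 1 := by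
    simp [norm_smul, hnorm.ne']
  have hfu : (f (‖p‖⁻¹ • p))⁻¹ = ‖p‖ := by
    rw [hf_hom _ (inv_pos.mpr hnorm), hp, mul_one, inv_inv]
  simpa [hfu] using hC (mem_image_of_mem _ hu)

end Homogeneous

section InnerProduct

variable {E : Type*} [NormedAddCommGroup E] [InnerProductSpace ℝ E] {f : E → ℝ}

theorem inner_le_of_homogeneous {q : E} (hf_hom : ∀ t : ℝ, 0 < t → ∀ x, f (t • x) = t * f x)
    (hf_pos : ∀ x, x ≠ 0 → 0 < f x) (hq : ∀ p, f p = 1 → ⟪p, q⟫ ≤ 1) (x : E) :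
    ⟪x, q⟫ ≤ f x := by
  rcases eq_or_ne x 0 with rfl | hx
  · simp [apply_zero_of_homogeneous hf_hom]
  have hfx := hf_pos x hx
  have h := hq ((f x)⁻¹ • x) (by rw [hf_hom _ (inv_pos.mpr hfx), inv_mul_cancel₀ hfx.ne'])
  rwa [real_inner_smul_left, inv_mul_le_iff₀ hfx, mul_one] at h

variable [CompleteSpace E] {g p : E}

theorem HasGradientAt.inner_self_eq_of_homogeneous
    (hf_hom : ∀ t : ℝ, 0 < t → ∀ x, f (t • x) = t * f x) (hf : HasGradientAt f g p) :
    ⟪p, g⟫ = f p := by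
  have hline : HasDerivAt (fun t : ℝ ↦ f (p + t • p)) ⟪g, p⟫ 0 :=
    hf.hasFDerivAt.hasLineDerivAt p
  have hscale : (fun t : ℝ ↦ (1 + t) * f p) =ᶠ[𝓝 0] fun t ↦ f (p + t • p) := by
    filter_upwards [Ioi_mem_nhds (by norm_num : (-1 : ℝ) < 0)] with t (ht : -1 < t)
    rw [show p + t • p = (1 + t) • p by module, hf_hom (1 + t) (by linarith) p]
  rw [real_inner_comm]
  exact (hline.congr_of_eventuallyEq hscale).unique <| by
    simpa using ((hasDerivAt_id (0 : ℝ)).const_add 1).mul_const (f p)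

theorem IsMaxOn.inner_gradient_le {s : Set E} {x : E} (hs : Convex ℝ s)
    (hmax : IsMaxOn f s p) (hf : HasGradientAt f g p) (hp : p ∈ s) (hx : x ∈ s) :
    ⟪x, g⟫ ≤ ⟪p, g⟫ := by
  have h : ⟪g, x - p⟫ ≤ 0 :=
    hmax.localize.hasFDerivWithinAt_nonpos hf.hasFDerivAt.hasFDerivWithinAt
      (sub_mem_posTangentConeAt_of_segment_subset (hs.segment_subset hp hx))
  rwa [inner_sub_right, sub_nonpos, real_inner_comm x, real_inner_comm p] at h

theorem HasGradientAt.eq_of_inner_le {q : E} (hf : HasGradientAt f g p)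
    (hle : ∀ x, ⟪x, q⟫ ≤ f x) (heq : ⟪p, q⟫ = f p) : q = g := by
  have hmin : IsLocalMin (fun x ↦ f x - toDual ℝ E q x) p := by
    refine IsMinOn.isLocalMin (isMinOn_univ_iff.mpr fun x ↦ ?_) univ_mem
    simp only [toDual_apply_apply]
    linarith [hle x, real_inner_comm x q, real_inner_comm p q]
  have h := hmin.hasFDerivAt_eq_zero (hf.hasFDerivAt.sub (toDual ℝ E q).hasFDerivAt)
  rw [sub_eq_zero] at h
  exact ((toDual ℝ E).injective h).symm

end InnerProduct

theorem legendre_transform_eq_general (d : ℕ)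
    (f : EuclideanSpace ℝ (Fin d) → ℝ)
    (gradf : EuclideanSpace ℝ (Fin d) → EuclideanSpace ℝ (Fin d))
    (hf_cont : Continuous f)
    (hf_hom : ∀ t : ℝ, 0 < t → ∀ x, f (t • x) = t * f x)
    (hf_pos : ∀ x : EuclideanSpace ℝ (Fin d), x ≠ 0 → 0 < f x)
    (hf_grad : ∀ x : EuclideanSpace ℝ (Fin d), x ≠ 0 → HasGradientAt f (gradf x) x)
    (hconv : StrictConvex ℝ {x : EuclideanSpace ℝ (Fin d) | f x ≤ 1}) :
    {q : EuclideanSpace ℝ (Fin d) | ∃ p, f p = 1 ∧ q = (⟪p, gradf p⟫)⁻¹ • gradf p} =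
      {q : EuclideanSpace ℝ (Fin d) | sSup {r : ℝ | ∃ p, f p = 1 ∧ r = ⟪p, q⟫} = 1} := by
  have hgrad : ∀ p, f p = 1 → HasGradientAt f (gradf p) p := fun p hp ↦
    hf_grad p fun h ↦ by simp [h, apply_zero_of_homogeneous hf_hom] at hp
  have euler : ∀ p, f p = 1 → ⟪p, gradf p⟫ = 1 := fun p hp ↦ by
    rw [(hgrad p hp).inner_self_eq_of_homogeneous hf_hom, hp]
  ext q
  have himage : {r : ℝ | ∃ p, f p = 1 ∧ r = ⟪p, q⟫} = (fun x ↦ ⟪x, q⟫) '' (f ⁻¹' {1}) := by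
    ext; simp [eq_comm]
  simp only [mem_ofPred_eq, himage]
  constructor
  · rintro ⟨p, hp, rfl⟩
    rw [euler p hp, inv_one, one_smul]
    refine IsGreatest.csSup_eq ⟨⟨p, hp, euler p hp⟩, ?_⟩
    rintro _ ⟨x, hx, rfl⟩
    exact euler p hp ▸ IsMaxOn.inner_gradient_le hconv.convex (fun y hy ↦ hp ▸ hy)
      (hgrad p hp) hp.le (le_of_eq hx)
  · intro hq
    have hN : (f ⁻¹' {1}).Nonempty := by
      by_contra h
      rw [not_nonempty_iff_eq_empty.mp h, image_empty, Real.sSup_empty] at hq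
      exact zero_ne_one hq
    obtain ⟨p, hp, hsup, hmax⟩ :=
      (isCompact_preimage_one_of_homogeneous hf_cont hf_hom hf_pos).exists_sSup_image_eq_and_ge
        (f := fun x ↦ ⟪x, q⟫) hN (by fun_prop)
    have hq_eq : q = gradf p := (hgrad p hp).eq_of_inner_le
      (inner_le_of_homogeneous hf_hom hf_pos fun x hx ↦ hq ▸ hsup ▸ hmax x hx)
      (by rw [← hsup, hq, hp])
    exact ⟨p, hp, by rw [euler p hp, inv_one, one_smul, hq_eq]⟩

/-- **Lemma 3.2, last assertion.** For a smooth, compact, strictly convex hypersurface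
`N = f⁻¹(1)` enclosing the origin, the Legendre transform
`L(N) = { ⟨p, ∇f p⟩⁻¹ • ∇f p | p ∈ N }` equals `{ q | sup_{p ∈ N} ⟨p, q⟩ = 1 }`. -/
theorem legendre_transform_eq (d : ℕ) (hd : 1 ≤ d)
    (f : EuclideanSpace ℝ (Fin d) → ℝ)
    (gradf : EuclideanSpace ℝ (Fin d) → EuclideanSpace ℝ (Fin d))
    (hf_cont : Continuous f)
    (hf_hom : ∀ t : ℝ, 0 < t → ∀ x, f (t • x) = t * f x)
    (hf_pos : ∀ x : EuclideanSpace ℝ (Fin d), x ≠ 0 → 0 < f x)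
    (hf_grad : ∀ x : EuclideanSpace ℝ (Fin d), x ≠ 0 → HasGradientAt f (gradf x) x)
    (hgrad_cont : ContinuousOn gradf {x : EuclideanSpace ℝ (Fin d) | x ≠ 0})
    (hconv : StrictConvex ℝ {x : EuclideanSpace ℝ (Fin d) | f x ≤ 1}) :
    {q : EuclideanSpace ℝ (Fin d) | ∃ p, f p = 1 ∧ q = (⟪p, gradf p⟫)⁻¹ • gradf p} =
      {q : EuclideanSpace ℝ (Fin d) | sSup {r : ℝ | ∃ p, f p = 1 ∧ r = ⟪p, q⟫} = 1} :=
  legendre_transform_eq_general d f gradf hf_cont hf_hom hf_pos hf_grad hconv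
end

section
/- Let μ : Fin d → ℝ be a vector with μ j ≥ 0 for all j (the Maslov shift). In the convex homogeneous setup, for every m : Fin d → ℕ and every real ħ > 0, the number f(ħ • (m + μ)) is the least upper bound (IsLUB) of { ħ * ⟪m + μ, k⟫ / ⟪p, k⟫ | k : Fin d → ℤ, p ∈ N, ∃ T > 0, ∇f p = T • k }. (Section 8: the Maslov-shifted EBK energies are E_m^μ = sup_{(k,a)∈𝒜} ħ⟨m+μ,k⟩/a.) -/
open scoped RealInnerProductSpace

/-- The shifted vector `m + μ` regarded as an element of Euclidean space. -/
def shiftVec {d : ℕ} (m : Fin d → ℕ) (μ : Fin d → ℝ) : EuclideanSpace ℝ (Fin d) :=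
  WithLp.toLp 2 (fun i => (m i : ℝ) + μ i)

namespace EBKAux

open Filter Topology Set

variable {d : ℕ} {f : EuclideanSpace ℝ (Fin d) → ℝ}
  {gradf : EuclideanSpace ℝ (Fin d) → EuclideanSpace ℝ (Fin d)}

lemma f_zero (hf_hom : ∀ t : ℝ, 0 < t → ∀ x, f (t • x) = t * f x) : f 0 = 0 := by
  have h := hf_hom 2 two_pos 0
  rw [smul_zero] at h; linarith

lemma euler (hf_hom : ∀ t : ℝ, 0 < t → ∀ x, f (t • x) = t * f x)
    (hf_grad : ∀ x : EuclideanSpace ℝ (Fin d), x ≠ 0 → HasGradientAt f (gradf x) x)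
    {p : EuclideanSpace ℝ (Fin d)} (hp : p ≠ 0) : ⟪gradf p, p⟫ = f p := by
  have hg : HasFDerivAt f ((InnerProductSpace.toDual ℝ _) (gradf p)) ((1:ℝ) • p) := by
    rw [one_smul]
    exact hasGradientAt_iff_hasFDerivAt.mp (hf_grad p hp)
  have hc : HasDerivAt (fun t : ℝ => t • p) p 1 := by
    simpa using (hasDerivAt_id (1:ℝ)).smul_const p
  have h1 : HasDerivAt (fun t : ℝ => f (t • p)) ⟪gradf p, p⟫ 1 := by
    have h := hg.comp_hasDerivAt 1 hc
    simp only [Function.comp_def, InnerProductSpace.toDual_apply_apply] at h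
    exact h
  have h2 : HasDerivAt (fun t : ℝ => t * f p) (f p) 1 := by
    simpa using (hasDerivAt_id (1:ℝ)).mul_const (f p)
  have heq : (fun t : ℝ => f (t • p)) =ᶠ[𝓝 (1:ℝ)] fun t => t * f p := by
    filter_upwards [eventually_gt_nhds zero_lt_one] with t ht
    exact hf_hom t ht p
  exact ((h2.congr_of_eventuallyEq heq).unique h1).symm

lemma subadd (hf_hom : ∀ t : ℝ, 0 < t → ∀ x, f (t • x) = t * f x)
    (hf_pos : ∀ x : EuclideanSpace ℝ (Fin d), x ≠ 0 → 0 < f x)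
    (hconv : Convex ℝ {x : EuclideanSpace ℝ (Fin d) | f x ≤ 1}) :
    ∀ x y, f (x + y) ≤ f x + f y := by
  intro x y
  rcases eq_or_ne x 0 with rfl | hx
  · simp [f_zero hf_hom]
  rcases eq_or_ne y 0 with rfl | hy
  · simp [f_zero hf_hom]
  have hfx := hf_pos x hx
  have hfy := hf_pos y hy
  have hxK : (f x)⁻¹ • x ∈ {x : EuclideanSpace ℝ (Fin d) | f x ≤ 1} := by
    simp only [mem_setOf_eq]
    rw [hf_hom _ (by positivity), inv_mul_cancel₀ hfx.ne']
  have hyK : (f y)⁻¹ • y ∈ {x : EuclideanSpace ℝ (Fin d) | f x ≤ 1} := by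
    simp only [mem_setOf_eq]
    rw [hf_hom _ (by positivity), inv_mul_cancel₀ hfy.ne']
  have hcomb := hconv hxK hyK (a := f x / (f x + f y)) (b := f y / (f x + f y))
    (by positivity) (by positivity) (by field_simp)
  have hpt : (f x / (f x + f y)) • ((f x)⁻¹ • x) + (f y / (f x + f y)) • ((f y)⁻¹ • y)
      = (f x + f y)⁻¹ • (x + y) := by
    rw [smul_smul, smul_smul, smul_add]
    congr 1
    · congr 1; field_simp
    · congr 1; field_simp
  rw [hpt, mem_setOf_eq] at hcomb
  have h2 := hf_hom (f x + f y) (by positivity) ((f x + f y)⁻¹ • (x + y))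
  rw [smul_inv_smul₀ (by positivity)] at h2
  nlinarith

lemma convexOn_f (hf_hom : ∀ t : ℝ, 0 < t → ∀ x, f (t • x) = t * f x)
    (hf_pos : ∀ x : EuclideanSpace ℝ (Fin d), x ≠ 0 → 0 < f x)
    (hconv : Convex ℝ {x : EuclideanSpace ℝ (Fin d) | f x ≤ 1}) :
    ConvexOn ℝ univ f := by
  refine ⟨convex_univ, ?_⟩
  intro x _ y _ a b ha hb hab
  rcases ha.eq_or_lt with rfl | ha'
  · have hb1 : b = 1 := by linarith
    simp [hb1]
  rcases hb.eq_or_lt with rfl | hb'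
  · have ha1 : a = 1 := by linarith
    simp [ha1]
  calc f (a • x + b • y) ≤ f (a • x) + f (b • y) := subadd hf_hom hf_pos hconv _ _
    _ = a * f x + b * f y := by rw [hf_hom a ha', hf_hom b hb']

lemma hasDerivAt_line
    (hf_grad : ∀ x : EuclideanSpace ℝ (Fin d), x ≠ 0 → HasGradientAt f (gradf x) x)
    {p : EuclideanSpace ℝ (Fin d)} (hp : p ≠ 0) (v : EuclideanSpace ℝ (Fin d)) :
    HasDerivAt (fun t : ℝ => f (p + t • v)) ⟪gradf p, v⟫ 0 := by
  have hg : HasFDerivAt f ((InnerProductSpace.toDual ℝ _) (gradf p)) (p + (0:ℝ) • v) := by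
    rw [zero_smul, add_zero]
    exact hasGradientAt_iff_hasFDerivAt.mp (hf_grad p hp)
  have hc : HasDerivAt (fun t : ℝ => p + t • v) v 0 := by
    simpa using ((hasDerivAt_id (0:ℝ)).smul_const v).const_add p
  have h := hg.comp_hasDerivAt 0 hc
  simp only [Function.comp_def, InnerProductSpace.toDual_apply_apply] at h
  exact h

lemma grad_le
    (hf_grad : ∀ x : EuclideanSpace ℝ (Fin d), x ≠ 0 → HasGradientAt f (gradf x) x)
    (hconvf : ConvexOn ℝ univ f)
    {p : EuclideanSpace ℝ (Fin d)} (hp : p ≠ 0) (x : EuclideanSpace ℝ (Fin d)) :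
    ⟪gradf p, x⟫ ≤ f x - f p + ⟪gradf p, p⟫ := by
  set v := x - p with hv
  have hφ := hasDerivAt_line hf_grad hp v
  have hslope : Tendsto (slope (fun t : ℝ => f (p + t • v)) 0) (𝓝[>] 0) (𝓝 ⟪gradf p, v⟫) :=
    (hasDerivAt_iff_tendsto_slope.mp hφ).mono_left
      (nhdsWithin_mono _ (fun t ht => ne_of_gt ht))
  have hub : ∀ᶠ t in 𝓝[>] (0:ℝ), slope (fun t : ℝ => f (p + t • v)) 0 t ≤ f x - f p := by
    filter_upwards [Ioc_mem_nhdsGT_of_mem ⟨le_refl 0, zero_lt_one⟩] with t ht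
    obtain ⟨ht0, ht1⟩ := ht
    have hcvx := hconvf.2 (mem_univ p) (mem_univ x)
      (show (0:ℝ) ≤ 1 - t by linarith) ht0.le (by ring)
    have hpt : (1 - t) • p + t • x = p + t • v := by
      rw [hv]; module
    rw [hpt] at hcvx
    rw [slope_def_field]
    simp only [zero_smul, add_zero, sub_zero]
    rw [div_le_iff₀ ht0]
    rw [smul_eq_mul, smul_eq_mul] at hcvx
    nlinarith
  have hle : ⟪gradf p, v⟫ ≤ f x - f p := le_of_tendsto hslope hub
  rw [hv, inner_sub_right] at hle
  linarith

lemma coercive (hf_cont : Continuous f)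
    (hf_hom : ∀ t : ℝ, 0 < t → ∀ x, f (t • x) = t * f x)
    (hf_pos : ∀ x : EuclideanSpace ℝ (Fin d), x ≠ 0 → 0 < f x)
    {x0 : EuclideanSpace ℝ (Fin d)} (hx0 : ‖x0‖ = 1) :
    ∃ c : ℝ, 0 < c ∧ ∀ x, c * ‖x‖ ≤ f x := by
  obtain ⟨z, hz, hmin⟩ := (isCompact_sphere (0 : EuclideanSpace ℝ (Fin d)) 1).exists_isMinOn
    ⟨x0, by simp [hx0]⟩ hf_cont.continuousOn
  have hz1 : ‖z‖ = 1 := by simpa using hz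
  have hz0 : z ≠ 0 := by intro h; rw [h, norm_zero] at hz1; norm_num at hz1
  refine ⟨f z, hf_pos z hz0, fun x => ?_⟩
  rcases eq_or_ne x 0 with rfl | hx
  · simp [f_zero hf_hom]
  have hxn : 0 < ‖x‖ := norm_pos_iff.mpr hx
  have hu : ‖x‖⁻¹ • x ∈ Metric.sphere (0 : EuclideanSpace ℝ (Fin d)) 1 := by
    simp [norm_smul, abs_of_pos (inv_pos.mpr hxn), inv_mul_cancel₀ hxn.ne']
  have h1 : f z ≤ f (‖x‖⁻¹ • x) := hmin hu
  have h2 := hf_hom ‖x‖ hxn (‖x‖⁻¹ • x)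
  rw [smul_inv_smul₀ hxn.ne'] at h2
  nlinarith

lemma small_ball (hf_cont : Continuous f)
    (hf_hom : ∀ t : ℝ, 0 < t → ∀ x, f (t • x) = t * f x) :
    ∃ r : ℝ, 0 < r ∧ ∀ x : EuclideanSpace ℝ (Fin d), ‖x‖ ≤ r → f x ≤ 1 := by
  have h0 : f 0 = 0 := f_zero hf_hom
  have hca := hf_cont.continuousAt (x := 0)
  rw [Metric.continuousAt_iff] at hca
  obtain ⟨δ, hδ, h⟩ := hca 1 one_pos
  refine ⟨δ / 2, by positivity, fun x hx => ?_⟩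
  have hd : dist x 0 < δ := by rw [dist_zero_right]; linarith
  have := h hd
  rw [Real.dist_eq, h0, sub_zero] at this
  cases abs_lt.mp this with
  | intro h1 h2 => linarith

lemma key_max (hf_cont : Continuous f)
    (hf_hom : ∀ t : ℝ, 0 < t → ∀ x, f (t • x) = t * f x)
    (hf_pos : ∀ x : EuclideanSpace ℝ (Fin d), x ≠ 0 → 0 < f x)
    (hf_grad : ∀ x : EuclideanSpace ℝ (Fin d), x ≠ 0 → HasGradientAt f (gradf x) x)
    {x0 : EuclideanSpace ℝ (Fin d)} (hx0 : ‖x0‖ = 1)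
    {q : EuclideanSpace ℝ (Fin d)} (hq : q ≠ 0) :
    ∃ p, f p = 1 ∧ (∃ T : ℝ, 0 < T ∧ gradf p = T • q) ∧
      ∀ x, f x ≤ 1 → ⟪x, q⟫ ≤ ⟪p, q⟫ := by
  obtain ⟨c, hc, hcoer⟩ := coercive hf_cont hf_hom hf_pos hx0
  obtain ⟨r, hr, hball⟩ := small_ball hf_cont hf_hom
  have hKclosed : IsClosed {x : EuclideanSpace ℝ (Fin d) | f x ≤ 1} :=
    isClosed_le hf_cont continuous_const
  have hKsub : {x : EuclideanSpace ℝ (Fin d) | f x ≤ 1} ⊆ Metric.closedBall 0 c⁻¹ := by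
    intro x hx
    rw [Metric.mem_closedBall, dist_zero_right]
    have h1 := hcoer x
    rw [mem_setOf_eq] at hx
    rw [inv_eq_one_div, le_div_iff₀ hc]
    nlinarith
  have hK : IsCompact {x : EuclideanSpace ℝ (Fin d) | f x ≤ 1} :=
    (isCompact_closedBall 0 c⁻¹).of_isClosed_subset hKclosed hKsub
  have hcontinner : Continuous fun x : EuclideanSpace ℝ (Fin d) => ⟪x, q⟫ :=
    continuous_id.inner continuous_const
  obtain ⟨p, hpK, hmax⟩ := hK.exists_isMaxOn ⟨0, by simp [f_zero hf_hom]⟩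
    hcontinner.continuousOn
  rw [mem_setOf_eq] at hpK
  have hmax' : ∀ x, f x ≤ 1 → ⟪x, q⟫ ≤ ⟪p, q⟫ := fun x hx => hmax hx
  have hqn : 0 < ‖q‖ := norm_pos_iff.mpr hq
  have hrq : f ((r / ‖q‖) • q) ≤ 1 := by
    apply hball
    rw [norm_smul, Real.norm_eq_abs, abs_of_pos (by positivity)]
    rw [div_mul_cancel₀ _ hqn.ne']
  have hpq_pos : 0 < ⟪p, q⟫ := by
    have h1 := hmax' _ hrq
    rw [real_inner_smul_left] at h1
    have h2 : 0 < (r / ‖q‖) * ⟪q, q⟫ := by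
      have h3 : 0 < ⟪q, q⟫ := by
        rw [real_inner_self_eq_norm_sq]; exact pow_pos hqn 2
      positivity
    linarith
  have hp0 : p ≠ 0 := by
    intro h; rw [h, inner_zero_left] at hpq_pos; exact lt_irrefl 0 hpq_pos
  have hfp : f p = 1 := by
    by_contra hne
    have hlt : f p < 1 := lt_of_le_of_ne hpK hne
    have hfppos := hf_pos p hp0
    have hmem : f ((f p)⁻¹ • p) ≤ 1 := by
      rw [hf_hom _ (inv_pos.mpr hfppos), inv_mul_cancel₀ hfppos.ne']
    have h2 := hmax' _ hmem
    rw [real_inner_smul_left] at h2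
    have h3 : (1:ℝ) < (f p)⁻¹ := (one_lt_inv₀ hfppos).mpr hlt
    nlinarith
  have heulerp : ⟪gradf p, p⟫ = 1 := by rw [euler hf_hom hf_grad hp0, hfp]
  have ha0 : gradf p ≠ 0 := by
    intro h; rw [h, inner_zero_left] at heulerp; norm_num at heulerp
  have step1 : ∀ v : EuclideanSpace ℝ (Fin d), ⟪gradf p, v⟫ < 0 → ⟪v, q⟫ ≤ 0 := by
    intro v hv
    have hφ := hasDerivAt_line hf_grad hp0 v
    have hslope : Tendsto (slope (fun t : ℝ => f (p + t • v)) 0) (𝓝[>] 0)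
        (𝓝 ⟪gradf p, v⟫) :=
      (hasDerivAt_iff_tendsto_slope.mp hφ).mono_left
        (nhdsWithin_mono _ (fun t ht => ne_of_gt ht))
    have hev : ∀ᶠ t in 𝓝[>] (0:ℝ), slope (fun t : ℝ => f (p + t • v)) 0 t < 0 :=
      hslope.eventually_lt_const hv
    obtain ⟨t, hst, htpos⟩ := (hev.and eventually_mem_nhdsWithin).exists
    rw [mem_Ioi] at htpos
    rw [slope_def_field] at hst
    simp only [zero_smul, add_zero, sub_zero] at hst
    have hlt1 : f (p + t • v) < 1 := by
      rw [div_lt_iff₀ htpos, zero_mul] at hst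
      linarith [hfp ▸ hst]
    have hle := hmax' _ hlt1.le
    rw [inner_add_left, real_inner_smul_left] at hle
    nlinarith
  have step2 : ∀ v : EuclideanSpace ℝ (Fin d), ⟪gradf p, v⟫ ≤ 0 → ⟪v, q⟫ ≤ 0 := by
    intro v hv
    have haa : 0 < ⟪gradf p, gradf p⟫ := by
      rw [real_inner_self_eq_norm_sq]; exact pow_pos (norm_pos_iff.mpr ha0) 2
    have key : ∀ ε : ℝ, 0 < ε → ⟪v, q⟫ ≤ ε * ⟪gradf p, q⟫ := by
      intro ε hε
      have h1 : ⟪gradf p, v - ε • gradf p⟫ < 0 := by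
        rw [inner_sub_right, real_inner_smul_right]
        nlinarith
      have h2 := step1 _ h1
      rw [inner_sub_left, real_inner_smul_left] at h2
      linarith
    have hlim : Tendsto (fun ε : ℝ => ε * ⟪gradf p, q⟫) (𝓝[>] 0) (𝓝 0) := by
      have hco : Continuous (fun ε : ℝ => ε * ⟪gradf p, q⟫) := continuous_id.mul continuous_const
      have h5 := hco.tendsto (0:ℝ)
      rw [zero_mul] at h5
      exact h5.mono_left nhdsWithin_le_nhds
    refine ge_of_tendsto hlim ?_
    filter_upwards [eventually_mem_nhdsWithin] with ε hε
    exact key ε (mem_Ioi.mp hε)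
  have step3 : ∀ v : EuclideanSpace ℝ (Fin d), ⟪gradf p, v⟫ = 0 → ⟪v, q⟫ = 0 := by
    intro v hv
    have h1 := step2 v hv.le
    have h2 := step2 (-v) (by rw [inner_neg_right, hv, neg_zero])
    rw [inner_neg_left] at h2
    linarith
  have haa : 0 < ⟪gradf p, gradf p⟫ := by
    rw [real_inner_self_eq_norm_sq]; exact pow_pos (norm_pos_iff.mpr ha0) 2
  set cc := ⟪gradf p, q⟫ / ⟪gradf p, gradf p⟫ with hcc
  have hq_eq : q = cc • gradf p := by
    have horth : ⟪gradf p, q - cc • gradf p⟫ = 0 := by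
      rw [inner_sub_right, real_inner_smul_right, hcc,
        div_mul_cancel₀ _ haa.ne', sub_self]
    have h1 : ⟪q - cc • gradf p, q⟫ = 0 := step3 _ horth
    have h2 : ⟪q - cc • gradf p, q - cc • gradf p⟫ = 0 := by
      rw [inner_sub_right, real_inner_smul_right, h1]
      have : ⟪q - cc • gradf p, gradf p⟫ = 0 := by
        rw [real_inner_comm]; exact horth
      rw [this, mul_zero, sub_zero]
    rw [← sub_eq_zero]
    exact inner_self_eq_zero.mp h2
  have hccnn : 0 ≤ ⟪gradf p, q⟫ := by
    have h1 : ⟪gradf p, -gradf p⟫ < 0 := by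
      rw [inner_neg_right]; linarith
    have h2 := step1 _ h1
    rw [inner_neg_left] at h2
    linarith
  have hcc_pos : 0 < cc := by
    have h0 : 0 ≤ cc := div_nonneg hccnn haa.le
    rcases h0.eq_or_lt with h | h
    · exfalso; apply hq; rw [hq_eq, ← h, zero_smul]
    · exact h
  refine ⟨p, hfp, ⟨cc⁻¹, inv_pos.mpr hcc_pos, ?_⟩, hmax'⟩
  rw [hq_eq, smul_smul, inv_mul_cancel₀ hcc_pos.ne', one_smul]

end EBKAux

set_option maxHeartbeats 1000000 in
/-- **Section 8 (Maslov shifts).** With Maslov shift vector `μ ≥ 0`, the shifted EBK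
energy `f (ħ • (m + μ))` is the least upper bound of
`{ ħ⟨m+μ,k⟩/⟨p,k⟩ | k ∈ ℤⁿ, p ∈ N, ∇f p ∼ k }`. -/
theorem ebk_convex_maslov_isLUB (d : ℕ) (hd : 1 ≤ d)
    (f : EuclideanSpace ℝ (Fin d) → ℝ)
    (gradf : EuclideanSpace ℝ (Fin d) → EuclideanSpace ℝ (Fin d))
    (hf_cont : Continuous f)
    (hf_hom : ∀ t : ℝ, 0 < t → ∀ x, f (t • x) = t * f x)
    (hf_pos : ∀ x : EuclideanSpace ℝ (Fin d), x ≠ 0 → 0 < f x)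
    (hf_grad : ∀ x : EuclideanSpace ℝ (Fin d), x ≠ 0 → HasGradientAt f (gradf x) x)
    (hgrad_cont : ContinuousOn gradf {x : EuclideanSpace ℝ (Fin d) | x ≠ 0})
    (hconv : StrictConvex ℝ {x : EuclideanSpace ℝ (Fin d) | f x ≤ 1})
    (μ : Fin d → ℝ) (hμ : ∀ j, 0 ≤ μ j)
    (m : Fin d → ℕ) (hbar : ℝ) (hhbar : 0 < hbar) :
    IsLUB { E : ℝ | ∃ (k : Fin d → ℤ) (p : EuclideanSpace ℝ (Fin d)),
        f p = 1 ∧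
        (∃ T : ℝ, 0 < T ∧ gradf p = T • intVec k) ∧
        E = hbar * ⟪shiftVec m μ, intVec k⟫ / ⟪p, intVec k⟫ }
      (f (hbar • shiftVec m μ)) := by
  classical
  open EBKAux Set Filter Topology in
  set w := shiftVec m μ with hw_def
  set ww := hbar • w with hww_def
  -- a unit vector
  have hx0 : ‖EuclideanSpace.single (⟨0, hd⟩ : Fin d) (1:ℝ)‖ = 1 := by
    rw [EuclideanSpace.norm_single]; norm_num
  set x0 : EuclideanSpace ℝ (Fin d) := EuclideanSpace.single (⟨0, hd⟩ : Fin d) (1:ℝ) with hx0def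
  have hconvf : ConvexOn ℝ Set.univ f := convexOn_f hf_hom hf_pos hconv.convex
  have heuler : ∀ p : EuclideanSpace ℝ (Fin d), p ≠ 0 → ⟪gradf p, p⟫ = f p :=
    fun p hp => euler hf_hom hf_grad hp
  have hgl : ∀ p : EuclideanSpace ℝ (Fin d), p ≠ 0 →
      ∀ x, ⟪gradf p, x⟫ ≤ f x - f p + ⟪gradf p, p⟫ :=
    fun p hp x => grad_le hf_grad hconvf hp x
  obtain ⟨c, hc, hcoer⟩ := coercive hf_cont hf_hom hf_pos hx0
  set R := c⁻¹ with hRdef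
  have hR : 0 < R := inv_pos.mpr hc
  have hnormK : ∀ x : EuclideanSpace ℝ (Fin d), f x ≤ 1 → ‖x‖ ≤ R := by
    intro x hx
    have h1 := hcoer x
    rw [hRdef, inv_eq_one_div, le_div_iff₀ hc]
    nlinarith
  constructor
  · -- upper bound
    rintro E ⟨k, p, hp1, ⟨T, hT, hgr⟩, rfl⟩
    have hp0 : p ≠ 0 := by
      intro h; rw [h, f_zero hf_hom] at hp1; norm_num at hp1
    have he : ⟪gradf p, p⟫ = 1 := by rw [heuler p hp0, hp1]
    have hpq : T * ⟪intVec k, p⟫ = 1 := by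
      rw [hgr, real_inner_smul_left] at he; exact he
    have hpqv : ⟪p, intVec k⟫ = T⁻¹ := by
      rw [real_inner_comm, inv_eq_one_div, eq_div_iff hT.ne']
      linear_combination hpq
    have h2 : ⟪gradf p, ww⟫ = T * (hbar * ⟪w, intVec k⟫) := by
      rw [hgr, hww_def, real_inner_smul_left, real_inner_smul_right, real_inner_comm]
    have h3 : hbar * ⟪w, intVec k⟫ / ⟪p, intVec k⟫ = ⟪gradf p, ww⟫ := by
      rw [h2, hpqv, div_eq_mul_inv, inv_inv]; ring
    rw [h3]
    have h4 := hgl p hp0 ww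
    rw [he, hp1] at h4
    linarith
  · -- least upper bound
    intro b hb
    rcases eq_or_ne w 0 with hw0 | hw0
    · have hk1 : intVec (fun _ : Fin d => (1:ℤ)) ≠ 0 := by
        intro h
        have h2 := congrArg (fun v => v ⟨0, hd⟩) h
        simp [intVec] at h2
      obtain ⟨p, hp1, hTex, hmax⟩ := key_max hf_cont hf_hom hf_pos hf_grad hx0 hk1
      have h0mem : (0:ℝ) ∈ { E : ℝ | ∃ (k : Fin d → ℤ) (p : EuclideanSpace ℝ (Fin d)),
          f p = 1 ∧ (∃ T : ℝ, 0 < T ∧ gradf p = T • intVec k) ∧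
          E = hbar * ⟪shiftVec m μ, intVec k⟫ / ⟪p, intVec k⟫ } := by
        refine ⟨fun _ => 1, p, hp1, hTex, ?_⟩
        rw [← hw_def, hw0, inner_zero_left, mul_zero, zero_div]
      have hf0 : f ww = 0 := by rw [hww_def, hw0, smul_zero, f_zero hf_hom]
      rw [hf0]
      exact hb h0mem
    · have hww0 : ww ≠ 0 := smul_ne_zero (ne_of_gt hhbar) hw0
      have hA : 0 < f ww := hf_pos _ hww0
      set A := f ww with hAdef
      set pstar := A⁻¹ • ww with hpstar
      have hpstar1 : f pstar = 1 := by
        rw [hpstar, hf_hom _ (inv_pos.mpr hA), ← hAdef, inv_mul_cancel₀ hA.ne']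
      have hpstar0 : pstar ≠ 0 := by
        intro h; rw [h, f_zero hf_hom] at hpstar1; norm_num at hpstar1
      set qs := gradf pstar with hqs
      have heuler_s : ⟪qs, pstar⟫ = 1 := by rw [hqs, heuler pstar hpstar0, hpstar1]
      have hqs0 : qs ≠ 0 := by
        intro h; rw [h, inner_zero_left] at heuler_s; norm_num at heuler_s
      have hqsn : 0 < ‖qs‖ := norm_pos_iff.mpr hqs0
      have hqsww : ⟪qs, ww⟫ = A := by
        have h1 : (1:ℝ) = A⁻¹ * ⟪qs, ww⟫ := by
          rw [← heuler_s, hpstar, real_inner_smul_right]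
        have h2 : A * 1 = A * (A⁻¹ * ⟪qs, ww⟫) := by rw [← h1]
        rw [← mul_assoc, mul_inv_cancel₀ hA.ne', one_mul, mul_one] at h2
        linarith
      have hpstarR : ‖pstar‖ ≤ R := hnormK _ hpstar1.le
      refine le_of_forall_pos_le_add ?_
      intro ε hε
      set C := ‖ww‖ + A * R + 1 with hC
      have hCpos : 0 < C := by positivity
      set δ := min (ε / C) (min ((2 * R + 1)⁻¹) (min (A / (‖ww‖ + 1)) (‖qs‖ / 2))) with hδdef
      have hδpos : 0 < δ := by
        apply lt_min (by positivity)
        apply lt_min (by positivity)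
        exact lt_min (by positivity) (by positivity)
      have hδ1 : δ ≤ ε / C := min_le_left _ _
      have hδ2 : δ ≤ (2 * R + 1)⁻¹ := le_trans (min_le_right _ _) (min_le_left _ _)
      have hδ3 : δ ≤ A / (‖ww‖ + 1) :=
        le_trans (min_le_right _ _) (le_trans (min_le_right _ _) (min_le_left _ _))
      have hδ4 : δ ≤ ‖qs‖ / 2 :=
        le_trans (min_le_right _ _) (le_trans (min_le_right _ _) (min_le_right _ _))
      obtain ⟨n, hn⟩ := exists_nat_gt (Real.sqrt d / δ)
      have hn0 : 0 < (n:ℝ) := lt_of_le_of_lt (by positivity) hn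
      set k : Fin d → ℤ := fun i => ⌊(n:ℝ) * qs i⌋ with hk
      set u : EuclideanSpace ℝ (Fin d) := (n:ℝ)⁻¹ • intVec k with hu
      have hcoord : ∀ i, |u i - qs i| ≤ (n:ℝ)⁻¹ := by
        intro i
        have hui : u i = (n:ℝ)⁻¹ * (⌊(n:ℝ) * qs i⌋ : ℝ) := by simp [hu, intVec, hk]
        have h1 := Int.lt_floor_add_one ((n:ℝ) * qs i)
        have h2 := Int.floor_le ((n:ℝ) * qs i)
        have hinv : (n:ℝ)⁻¹ * (n:ℝ) = 1 := inv_mul_cancel₀ hn0.ne'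
        have hip : 0 < (n:ℝ)⁻¹ := inv_pos.mpr hn0
        have e1 : (n:ℝ)⁻¹ * ((n:ℝ) * qs i) = qs i := by
          rw [← mul_assoc, hinv, one_mul]
        rw [hui, abs_le]
        constructor
        · nlinarith [mul_nonneg hip.le
            (by linarith : (0:ℝ) ≤ (⌊(n:ℝ) * qs i⌋ : ℝ) + 1 - (n:ℝ) * qs i), e1]
        · nlinarith [mul_nonneg hip.le
            (by linarith : (0:ℝ) ≤ (n:ℝ) * qs i - (⌊(n:ℝ) * qs i⌋ : ℝ)), e1]
      have happrox : ‖u - qs‖ ≤ δ := by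
        have hδn : Real.sqrt d ≤ n * δ := by
          rw [div_lt_iff₀ hδpos] at hn
          linarith
        rw [EuclideanSpace.norm_eq]
        have hsum : (∑ i, ‖(u - qs) i‖ ^ 2) ≤ ∑ _i : Fin d, ((n:ℝ)⁻¹) ^ 2 := by
          apply Finset.sum_le_sum
          intro i _
          have h1 : (u - qs) i = u i - qs i := rfl
          rw [h1, Real.norm_eq_abs]
          have := hcoord i
          nlinarith [abs_nonneg (u i - qs i)]
        calc Real.sqrt (∑ i, ‖(u - qs) i‖ ^ 2) ≤ Real.sqrt (∑ _i : Fin d, ((n:ℝ)⁻¹) ^ 2) :=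
              Real.sqrt_le_sqrt hsum
          _ = Real.sqrt (d * ((n:ℝ)⁻¹) ^ 2) := by
              rw [Finset.sum_const, Finset.card_univ, Fintype.card_fin, nsmul_eq_mul]
          _ = Real.sqrt d * (n:ℝ)⁻¹ := by
              rw [Real.sqrt_mul (by positivity), Real.sqrt_sq (by positivity)]
          _ ≤ δ := by
              rw [mul_inv_le_iff₀ hn0]
              linarith [hδn]
      have hune : u ≠ 0 := by
        intro h
        rw [h] at happrox
        rw [zero_sub, norm_neg] at happrox
        linarith [hqsn, le_trans happrox hδ4]
      have hkne : intVec k ≠ 0 := by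
        intro h
        apply hune
        rw [hu, h, smul_zero]
      obtain ⟨p, hp1, hTex, hmax⟩ := key_max hf_cont hf_hom hf_pos hf_grad hx0 hkne
      have hbE : hbar * ⟪w, intVec k⟫ / ⟪p, intVec k⟫ ≤ b := hb ⟨k, p, hp1, hTex, rfl⟩
      have hpR : ‖p‖ ≤ R := hnormK _ hp1.le
      -- rewrite E in terms of u
      have hEu : hbar * ⟪w, intVec k⟫ / ⟪p, intVec k⟫ = ⟪ww, u⟫ / ⟪p, u⟫ := by
        rw [hu, real_inner_smul_right, real_inner_smul_right, hww_def, real_inner_smul_left]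
        rw [mul_div_mul_left _ _ (inv_ne_zero hn0.ne')]
      -- estimates
      have hbound1 : |⟪pstar, u - qs⟫| ≤ R * δ := by
        calc |⟪pstar, u - qs⟫| ≤ ‖pstar‖ * ‖u - qs‖ := abs_real_inner_le_norm _ _
          _ ≤ R * δ := by
              apply mul_le_mul hpstarR happrox (norm_nonneg _) hR.le
      have hbound2 : |⟪p, u - qs⟫| ≤ R * δ := by
        calc |⟪p, u - qs⟫| ≤ ‖p‖ * ‖u - qs‖ := abs_real_inner_le_norm _ _
          _ ≤ R * δ := mul_le_mul hpR happrox (norm_nonneg _) hR.le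
      have hbound3 : |⟪ww, u - qs⟫| ≤ ‖ww‖ * δ := by
        calc |⟪ww, u - qs⟫| ≤ ‖ww‖ * ‖u - qs‖ := abs_real_inner_le_norm _ _
          _ ≤ ‖ww‖ * δ := by
              apply mul_le_mul le_rfl happrox (norm_nonneg _) (norm_nonneg _)
      have hsplit1 : ⟪pstar, u⟫ = 1 + ⟪pstar, u - qs⟫ := by
        rw [← real_inner_comm qs pstar] at heuler_s
        rw [inner_sub_right, heuler_s]
        ring
      have hsplit2 : ⟪p, u⟫ = ⟪p, qs⟫ + ⟪p, u - qs⟫ := by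
        rw [inner_sub_right]; ring
      have hsplit3 : ⟪ww, u⟫ = A + ⟪ww, u - qs⟫ := by
        rw [← real_inner_comm qs ww] at hqsww
        rw [inner_sub_right, hqsww]; ring
      have hpqs : ⟪p, qs⟫ ≤ 1 := by
        have h1 := hgl pstar hpstar0 p
        rw [heuler_s, hpstar1, hp1] at h1
        rw [real_inner_comm]
        linarith
      -- lower bound on ⟪p, u⟫ from maximality
      have hmaxu : ⟪pstar, u⟫ ≤ ⟪p, u⟫ := by
        have h1 := hmax pstar hpstar1.le
        rw [hu, real_inner_smul_right, real_inner_smul_right]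
        apply mul_le_mul_of_nonneg_left h1 (by positivity)
      have hRδ : R * δ ≤ 1 / 2 := by
        have h1 : δ * (2 * R + 1) ≤ 1 := by
          calc δ * (2 * R + 1) ≤ (2 * R + 1)⁻¹ * (2 * R + 1) :=
                mul_le_mul_of_nonneg_right hδ2 (by positivity)
            _ = 1 := inv_mul_cancel₀ (by positivity)
        nlinarith [hδpos.le, hR.le]
      have hpu_lower : 1 - R * δ ≤ ⟪p, u⟫ := by
        rw [hsplit1] at hmaxu
        have := abs_le.mp hbound1
        linarith
      have hpu_pos : 0 < ⟪p, u⟫ := by linarith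
      have hpu_upper : ⟪p, u⟫ ≤ 1 + R * δ := by
        rw [hsplit2]
        have := abs_le.mp hbound2
        linarith
      have hnum_lower : A - ‖ww‖ * δ ≤ ⟪ww, u⟫ := by
        rw [hsplit3]
        have := abs_le.mp hbound3
        linarith
      have hnum_pos : 0 < A - ‖ww‖ * δ := by
        have h1 : δ * (‖ww‖ + 1) ≤ A := by
          calc δ * (‖ww‖ + 1) ≤ (A / (‖ww‖ + 1)) * (‖ww‖ + 1) :=
                mul_le_mul_of_nonneg_right hδ3 (by positivity)
            _ = A := div_mul_cancel₀ _ (by positivity : (‖ww‖ + 1 : ℝ) ≠ 0)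
        linarith [hδpos]
      have hfrac : (A - ‖ww‖ * δ) / (1 + R * δ) ≤ ⟪ww, u⟫ / ⟪p, u⟫ := by
        apply div_le_div₀ (by linarith) hnum_lower hpu_pos hpu_upper
      have hδC : δ * C ≤ ε := by
        calc δ * C ≤ (ε / C) * C := mul_le_mul_of_nonneg_right hδ1 hCpos.le
          _ = ε := div_mul_cancel₀ _ hCpos.ne'
      have hfinal : A - ε ≤ (A - ‖ww‖ * δ) / (1 + R * δ) := by
        rw [le_div_iff₀ (add_pos_of_pos_of_nonneg one_pos
          (mul_nonneg hR.le hδpos.le) : (0:ℝ) < 1 + R * δ)]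
        have hexp : δ * (A * R + ‖ww‖) ≤ ε := by
          rw [hC] at hδC
          linarith [hδpos.le]
        linarith [hexp, mul_nonneg (mul_nonneg hε.le hR.le) hδpos.le]
      have : A - ε ≤ b := by
        rw [hEu] at hbE
        linarith [le_trans hfinal hfrac]
      linarith
end

section
/- For every real number m ≥ 0, the function 𝔣_m restricted to the interval [m, ∞) is a bijection onto [0, ∞) (Set.BijOn 𝔣_m (Set.Ici m) (Set.Ici 0)). In particular, for every real n ≥ 0 there is a unique F ≥ m with 𝔣_m(F) = n. (Section 7: 𝔣_m(m) = 0, 𝔣_m is strictly increasing and tends to ∞, giving the unique solvability of the EBK equation √(F²−m²) − m·arccos(m/F) = nπ for the disk billiard.) -/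
/-!
The arccos term exactly cancels part of the derivative of the square root:
`𝔣_m'(x) = √(x² − m²) / x > 0` for `x > m`, so `𝔣_m` is strictly increasing on `[m, ∞)`
with `𝔣_m(m) = 0`. Since `arccos ≤ π`, `𝔣_m(x) ≥ √(x² − m²) − mπ → ∞`, and the intermediate
value theorem gives surjectivity onto `[0, ∞)`.
-/

/-- The function `𝔣_m(x) = √(x² − m²) − m·arccos(m/x)` from Section 7. -/
noncomputable def frakf (m : ℝ) (x : ℝ) : ℝ :=
  Real.sqrt (x ^ 2 - m ^ 2) - m * Real.arccos (m / x)

open Real Set Filter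

theorem hasDerivAt_frakf {m x : ℝ} (hx : |m| < x) :
    HasDerivAt (frakf m) (√(x ^ 2 - m ^ 2) / x) x := by
  have hx0 : 0 < x := (abs_nonneg m).trans_lt hx
  have hd : 0 < x ^ 2 - m ^ 2 := by nlinarith [sq_abs m, abs_nonneg m]
  have hmx : |m / x| < 1 := by rwa [abs_div, abs_of_pos hx0, div_lt_one hx0]
  have hsin : √(1 - (m / x) ^ 2) = √(x ^ 2 - m ^ 2) / x := by
    rw [show 1 - (m / x) ^ 2 = (x ^ 2 - m ^ 2) / x ^ 2 by field_simp, sqrt_div' _ (sq_nonneg x),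
      sqrt_sq hx0.le]
  have hsqrt := ((hasDerivAt_pow 2 x).sub_const (m ^ 2)).sqrt hd.ne'
  have harccos := (hasDerivAt_arccos (abs_lt.1 hmx).1.ne' (abs_lt.1 hmx).2.ne).comp x
    ((hasDerivAt_const x m).div (hasDerivAt_id x) hx0.ne')
  refine (hsqrt.sub (harccos.const_mul m)).congr_deriv ?_
  have hs : 0 < √(x ^ 2 - m ^ 2) := sqrt_pos.2 hd
  rw [hsin]
  field_simp
  linear_combination -2 * sq_sqrt hd.le

theorem frakf_self (m : ℝ) : frakf m m = 0 := by
  rcases eq_or_ne m 0 with rfl | hm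
  · simp [frakf]
  · simp [frakf, div_self hm]

theorem continuousOn_frakf {m : ℝ} (hm : 0 ≤ m) : ContinuousOn (frakf m) (Ici m) := by
  refine (continuous_sqrt.comp (by fun_prop)).continuousOn.sub ?_
  rcases hm.eq_or_lt with rfl | hm
  · simpa using continuousOn_const
  · exact continuousOn_const.mul (continuous_arccos.comp_continuousOn
      (continuousOn_const.div continuousOn_id fun x hx => (hm.trans_le hx).ne'))

theorem frakf_strictMonoOn {m : ℝ} (hm : 0 ≤ m) : StrictMonoOn (frakf m) (Ici m) := by
  refine strictMonoOn_of_hasDerivWithinAt_pos (convex_Ici m) (continuousOn_frakf hm)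
    (f' := fun x => √(x ^ 2 - m ^ 2) / x) ?_ ?_ <;> rw [interior_Ici] <;> intro x (hx : m < x)
  · exact (hasDerivAt_frakf (by rwa [abs_of_nonneg hm])).hasDerivWithinAt
  · have : 0 < x ^ 2 - m ^ 2 := by nlinarith
    have : 0 < x := hm.trans_lt hx
    positivity

theorem sqrt_sub_mul_pi_le_frakf {m : ℝ} (hm : 0 ≤ m) (x : ℝ) :
    √(x ^ 2 - m ^ 2) - m * π ≤ frakf m x := by
  unfold frakf
  gcongr
  exact arccos_le_pi _

theorem tendsto_frakf_atTop {m : ℝ} (hm : 0 ≤ m) : Tendsto (frakf m) atTop atTop :=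
  tendsto_atTop_mono (sqrt_sub_mul_pi_le_frakf hm) <| tendsto_atTop_add_const_right _ _ <|
    tendsto_sqrt_atTop.comp <| tendsto_atTop_add_const_right _ _ <| tendsto_pow_atTop two_ne_zero

/-- **Section 7.** For every `m ≥ 0`, the function `𝔣_m` is a bijection from `[m, ∞)`
onto `[0, ∞)`; in particular, for every `n ≥ 0` the EBK equation `𝔣_m(F) = n` has a
unique solution `F ≥ m`. -/
theorem frakf_bijOn (m : ℝ) (hm : 0 ≤ m) :
    Set.BijOn (frakf m) (Set.Ici m) (Set.Ici (0 : ℝ)) ∧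
    ∀ n : ℝ, 0 ≤ n → ∃! F : ℝ, m ≤ F ∧ frakf m F = n := by
  have hmono := frakf_strictMonoOn hm
  have hbij : BijOn (frakf m) (Ici m) (Ici 0) := by
    refine ⟨fun x hx => ?_, hmono.injOn, ?_⟩
    · simpa [frakf_self] using hmono.monotoneOn self_mem_Ici hx hx
    · simpa [SurjOn, frakf_self] using
        intermediate_value_Ici (continuousOn_frakf hm) (tendsto_frakf_atTop hm)
  refine ⟨hbij, fun n hn => ?_⟩
  obtain ⟨F, hF, rfl⟩ := hbij.surjOn hn
  exact ⟨F, ⟨hF, rfl⟩, fun G ⟨hG, hGF⟩ => hbij.injOn hG hF hGF⟩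
end

section
/- Let K ⊆ L be a field extension and let A, B ⊆ L be subsets such that every element of A is algebraic over the intermediate field K(B) = IntermediateField.adjoin K B and every element of B is algebraic over K(A) = IntermediateField.adjoin K A. Then the transcendence degree of K(A) over K equals the transcendence degree of K(B) over K. (Lemma 6.1.) -/
/-!
Both transcendence degrees equal that of `K(A ∪ B)`: by additivity in the tower
`K ⊆ K(A) ⊆ K(A)(B) = K(A ∪ B)`, whose top step is algebraic, `K(A ∪ B)` has the transcendence
degree of `K(A)` over `K`, and symmetrically that of `K(B)`.
-/

/-- The transcendence degree of an algebra `L` over `K`: the supremum of the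
cardinalities of algebraically independent subsets of `L`. -/
noncomputable def trdeg (K L : Type*) [CommRing K] [CommRing L] [Algebra K L] : Cardinal :=
  ⨆ s : {s : Set L // AlgebraicIndependent K ((↑) : s → L)}, Cardinal.mk s.1

universe u v

open IntermediateField

theorem trdeg_eq_algebraTrdeg (K L : Type*) [CommRing K] [CommRing L] [Algebra K L] :
    trdeg K L = Algebra.trdeg K L :=
  rfl

theorem Algebra.trdeg_eq_of_isAlgebraic (R : Type u) {S A : Type v} [CommRing R] [Nontrivial R]
    [CommRing S] [CommRing A] [NoZeroDivisors A] [Algebra R S] [Algebra S A] [Algebra R A]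
    [FaithfulSMul R S] [FaithfulSMul S A] [IsScalarTower R S A] [Algebra.IsAlgebraic S A] :
    Algebra.trdeg R A = Algebra.trdeg R S := by
  rw [← trdeg_add_eq R S (A := A), trdeg_eq_zero (R := S) (A := A), add_zero]

theorem IntermediateField.trdeg_adjoin_union_of_isAlgebraic {K L : Type*} [Field K] [Field L]
    [Algebra K L] (A B : Set L) (hB : ∀ x ∈ B, IsAlgebraic (adjoin K A) x) :
    Algebra.trdeg K (adjoin K (A ∪ B)) = Algebra.trdeg K (adjoin K A) := by
  set M := adjoin K A
  have : Algebra.IsAlgebraic M (adjoin M B) := isAlgebraic_adjoin fun x hx => (hB x hx).isIntegral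
  -- instance search times out on this goal
  have : FaithfulSMul M (adjoin M B) :=
    (faithfulSMul_iff_algebraMap_injective _ _).2 (algebraMap M (adjoin M B)).injective
  rw [← adjoin_adjoin_left]
  exact Algebra.trdeg_eq_of_isAlgebraic K (S := M) (A := adjoin M B)

/-- **Lemma 6.1.** If every element of `A` is algebraic over `K(B)` and every element of
`B` is algebraic over `K(A)`, then `K(A)` and `K(B)` have the same transcendence degree
over `K`. -/
theorem trdeg_adjoin_eq_of_algebraic {K L : Type*} [Field K] [Field L] [Algebra K L]
    (A B : Set L)
    (hA : ∀ x ∈ A, IsAlgebraic (IntermediateField.adjoin K B) x)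
    (hB : ∀ x ∈ B, IsAlgebraic (IntermediateField.adjoin K A) x) :
    trdeg K (IntermediateField.adjoin K A) = trdeg K (IntermediateField.adjoin K B) := by
  rw [trdeg_eq_algebraTrdeg, trdeg_eq_algebraTrdeg,
    ← trdeg_adjoin_union_of_isAlgebraic A B hB, ← trdeg_adjoin_union_of_isAlgebraic B A hA,
    Set.union_comm]
end

section
/- For every real R > 0 and every α ∈ [0, π/2], the interval integral ∫ t in (R·cos α)..R, √(1 − R²·cos²α / t²) dt equals R·(sin α − α·cos α). (The action integral ∫_δ λ = 2R√(2E)(sin α − α cos α) in Section 5 for the radial loop δ of the disk billiard, after dividing by the factor 2√(2E).) -/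
/-!
Put `S = R cos α`. On `t > S` the function `√(t² - S²) - S arccos (S / t)` is an antiderivative
of `√(1 - S² / t²)`, and it vanishes at `t = S`; at `t = R` it equals `R sin α - S α`.
-/

open Real intervalIntegral Set

lemma sqrt_one_sub_sq_div_sq (S : ℝ) {t : ℝ} (ht : 0 < t) :
    √(1 - S ^ 2 / t ^ 2) = √(t ^ 2 - S ^ 2) / t := by
  rw [one_sub_div (by positivity), sqrt_div' _ (by positivity), sqrt_sq ht.le]

lemma hasDerivAt_sqrt_sq_sub_sq_sub_mul_arccos {S t : ℝ} (hSt : |S| < t) :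
    HasDerivAt (fun x => √(x ^ 2 - S ^ 2) - S * arccos (S / x)) (√(1 - S ^ 2 / t ^ 2)) t := by
  have ht : 0 < t := (abs_nonneg S).trans_lt hSt
  have hpos : 0 < t ^ 2 - S ^ 2 := by nlinarith [sq_abs S, abs_nonneg S]
  obtain ⟨hlow, hhigh⟩ : -1 < S / t ∧ S / t < 1 := by
    rw [← abs_lt, abs_div, abs_of_pos ht, div_lt_one ht]; exact hSt
  have hroot : HasDerivAt (fun x => √(x ^ 2 - S ^ 2)) (2 * t / (2 * √(t ^ 2 - S ^ 2))) t := by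
    simpa using ((hasDerivAt_pow 2 t).sub_const (S ^ 2)).sqrt hpos.ne'
  have hquot : HasDerivAt (fun x => S / x) (-S / t ^ 2) t := by
    simpa [div_eq_mul_inv, neg_div] using (hasDerivAt_inv ht.ne').const_mul S
  have harccos := (hasDerivAt_arccos hlow.ne' hhigh.ne).comp t hquot
  refine (hroot.sub (harccos.const_mul S)).congr_deriv ?_
  have hsq : √(t ^ 2 - S ^ 2) ^ 2 = t ^ 2 - S ^ 2 := sq_sqrt hpos.le
  have hsqrt_pos : 0 < √(t ^ 2 - S ^ 2) := sqrt_pos.2 hpos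
  rw [div_pow, sqrt_one_sub_sq_div_sq S ht]
  field_simp
  linear_combination -hsq

theorem integral_sqrt_one_sub_sq_div_sq {S R : ℝ} (hS : 0 ≤ S) (hSR : S ≤ R) :
    ∫ t in S..R, √(1 - S ^ 2 / t ^ 2) = √(R ^ 2 - S ^ 2) - S * arccos (S / R) := by
  rcases hS.eq_or_lt with rfl | hS
  · simp [sqrt_sq (hS.trans hSR)]
  have hne : ∀ t ∈ Icc S R, t ≠ 0 := fun t ht => (hS.trans_le ht.1).ne'
  have hcont : ContinuousOn (fun x => √(x ^ 2 - S ^ 2) - S * arccos (S / x)) (Icc S R) :=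
    (continuous_sqrt.comp (by fun_prop)).continuousOn.sub
      (continuousOn_const.mul (continuous_arccos.comp_continuousOn
        (continuousOn_const.div continuousOn_id hne)))
  have hint : IntervalIntegrable (fun t => √(1 - S ^ 2 / t ^ 2)) MeasureTheory.volume S R := by
    refine ContinuousOn.intervalIntegrable ?_
    rw [uIcc_of_le hSR]
    exact (continuousOn_const.sub (continuousOn_const.div (by fun_prop)
      fun t ht => pow_ne_zero 2 (hne t ht))).sqrt
  rw [integral_eq_sub_of_hasDerivAt_of_le hSR hcont
    (fun t ht => hasDerivAt_sqrt_sq_sub_sq_sub_mul_arccos ((abs_of_pos hS).trans_lt ht.1)) hint]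
  simp [div_self hS.ne']

/-- **Section 5, action integral of the radial loop `δ` of the disk billiard** (after
dividing by the factor `2√(2E)`): for `R > 0` and `α ∈ [0, π/2]`,
`∫_{R cos α}^{R} √(1 − R² cos²α / t²) dt = R (sin α − α cos α)`. -/
theorem disk_billiard_action_integral (R α : ℝ) (hR : 0 < R)
    (hα₀ : 0 ≤ α) (hα : α ≤ Real.pi / 2) :
    ∫ t in (R * Real.cos α)..R,
        Real.sqrt (1 - R ^ 2 * Real.cos α ^ 2 / t ^ 2)
      = R * (Real.sin α - α * Real.cos α) := by
  have hcos : 0 ≤ cos α := cos_nonneg_of_mem_Icc ⟨by linarith [pi_pos], hα⟩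
  have hsin : 0 ≤ sin α := sin_nonneg_of_nonneg_of_le_pi hα₀ (by linarith [pi_pos])
  have hS : R * cos α ≤ R := mul_le_of_le_one_right hR.le (cos_le_one α)
  have hroot : √(R ^ 2 - (R * cos α) ^ 2) = R * sin α := by
    rw [← sqrt_sq (mul_nonneg hR.le hsin)]
    congr 1
    linear_combination -R ^ 2 * sin_sq_add_cos_sq α
  have harccos : arccos (R * cos α / R) = α := by
    rw [mul_div_cancel_left₀ _ hR.ne', arccos_cos hα₀ (by linarith [pi_pos])]
  simp_rw [← mul_pow]
  rw [integral_sqrt_one_sub_sq_div_sq (mul_nonneg hR.le hcos) hS, hroot, harccos]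
  ring
end
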